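/- Let α > 2 and let E ⊂ ℝⁿ be measurable with 0 < |E| < ∞. Then for every ε > 0 there exists a countable collection of closed cubes {Q_i} with diam(Q_i) < ε covering E, such that Σ_i |Q_i| < 2|E|, and moreover, letting Γ = {i : |Q_i| ≤ α |Q_i ∩ E|}, we have (1 - 2/α)|E| ≤ Σ_{i∈Γ} |Q_i|. -/

import Mathlib

/-!
Cover `E` by small closed sup-norm balls (cubes) via the Besicovitch covering theorem, with
total volume at most `|E| + |E|/2`. A cube `Q` outside `Γ` satisfies `|Q ∩ E| < |Q| / α`, so
those cubes together cover at most `(1/α) Σ |Q_i| ≤ (2/α)|E|` of `E`; the cubes in `Γ` must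
therefore carry the remaining `(1 - 2/α)|E|`.
-/

open MeasureTheory Set Metric Filter Topology
open scoped ENNReal

theorem exists_closedBall_measure_lt {X : Type*} [MetricSpace X] [MeasurableSpace X]
    [OpensMeasurableSpace X] (μ : Measure X) [IsLocallyFiniteMeasure μ] [NullSingletonClass μ]
    (x : X) {δ : ℝ} (hδ : 0 < δ) {η : ℝ≥0∞} (hη : 0 < η) :
    ∃ ρ ∈ Ioo 0 δ, μ (closedBall x ρ) < η := by
  obtain ⟨U, hU, hUfin⟩ := μ.finiteAt_nhds x
  obtain ⟨R, hR, hRU⟩ := nhds_basis_closedBall.mem_iff.1 hU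
  have hfin : ∃ R > 0, μ (cthickening R {x}) ≠ ∞ :=
    ⟨R, hR, by rw [cthickening_singleton x hR.le]; exact ((measure_mono hRU).trans_lt hUfin).ne⟩
  have hlim : Tendsto (fun r => μ (closedBall x r)) (𝓝[>] 0) (𝓝 0) := by
    rw [← measure_singleton (μ := μ) x]
    refine ((tendsto_measure_cthickening_of_isClosed hfin isClosed_singleton).mono_left
      nhdsWithin_le_nhds).congr' ?_
    filter_upwards [self_mem_nhdsWithin] with r hr
    rw [cthickening_singleton x (le_of_lt hr)]
  exact (Eventually.and (Ioo_mem_nhdsGT hδ) (hlim.eventually (gt_mem_nhds hη))).exists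

theorem exists_seq_closedBall_covering_tsum_measure_le {X : Type*} [MetricSpace X]
    [SecondCountableTopology X] [MeasurableSpace X] [OpensMeasurableSpace X]
    [HasBesicovitchCovering X] [Nonempty X] (μ : Measure X) [SFinite μ] [μ.OuterRegular]
    [IsLocallyFiniteMeasure μ] [NullSingletonClass μ] (s : Set X) {δ : ℝ} (hδ : 0 < δ)
    {η : ℝ≥0∞} (hη : η ≠ 0) :
    ∃ (c : ℕ → X) (r : ℕ → ℝ), (∀ i, r i ∈ Ioo 0 δ) ∧ s ⊆ ⋃ i, closedBall (c i) (r i) ∧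
      ∑' i, μ (closedBall (c i) (r i)) ≤ μ s + η := by
  obtain ⟨t, r, ht, -, hr, hcover, hsum⟩ :=
    Besicovitch.exists_closedBall_covering_tsum_measure_le μ (ENNReal.half_pos hη).ne'
      (fun _ => Ioo 0 δ) s fun _ _ ε hε => by
        rw [Ioo_inter_Ioo, max_self]; exact nonempty_Ioo.2 (lt_min hδ hε)
  -- Besicovitch may return finitely many balls: pad with balls of summable measure.
  let x₀ : X := Classical.arbitrary X
  obtain ⟨η', hη'pos, hη'sum⟩ :=
    ENNReal.exists_pos_sum_of_countable' (ENNReal.half_pos hη).ne' ℕ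
  choose ρ hρ hρη' using fun i => exists_closedBall_measure_lt μ x₀ hδ (hη'pos i)
  have : Countable t := ht.to_subtype
  let e : ℕ ≃ t ⊕ ℕ := (nonempty_denumerable (t ⊕ ℕ)).some.eqv.symm
  let c : t ⊕ ℕ → X := Sum.elim (↑) fun _ => x₀
  let R : t ⊕ ℕ → ℝ := Sum.elim (fun x => r x) ρ
  refine ⟨c ∘ e, R ∘ e, fun i => ?_, fun x hx => ?_, ?_⟩
  · simp only [Function.comp_apply]
    rcases e i with x | i
    exacts [hr x x.2, hρ i]
  · obtain ⟨y, hy, hxy⟩ := mem_iUnion₂.1 (hcover hx)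
    exact mem_iUnion.2 ⟨e.symm (.inl ⟨y, hy⟩), by simpa [c, R] using hxy⟩
  · calc ∑' i, μ (closedBall ((c ∘ e) i) ((R ∘ e) i))
        = ∑' j, μ (closedBall (c j) (R j)) := e.tsum_eq (fun j => μ (closedBall (c j) (R j)))
      _ = ∑' x : t, μ (closedBall x (r x)) + ∑' i, μ (closedBall x₀ (ρ i)) :=
        ENNReal.summable.tsum_sum ENNReal.summable
      _ ≤ (μ s + η / 2) + η / 2 :=
        add_le_add hsum ((ENNReal.tsum_le_tsum fun i => (hρη' i).le).trans hη'sum.le)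
      _ = μ s + η := by rw [add_assoc, ENNReal.add_halves]

theorem measure_le_tsum_substantial_add {X ι : Type*} [MeasurableSpace X] [Countable ι]
    (μ : Measure X) {E : Set X} {Q : ι → Set X} (hE : E ⊆ ⋃ i, Q i) {a : ℝ≥0∞}
    (ha₀ : a ≠ 0) (ha : a ≠ ∞) :
    μ E ≤ ∑' i : {i | μ (Q i) ≤ a * μ (Q i ∩ E)}, μ (Q i) + a⁻¹ * ∑' i, μ (Q i) := by
  set Γ := {i | μ (Q i) ≤ a * μ (Q i ∩ E)}
  have hsmall : ∀ i ∉ Γ, μ (Q i ∩ E) ≤ a⁻¹ * μ (Q i) := fun i hi =>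
    (ENNReal.mul_le_iff_le_inv ha₀ ha).1 (not_le.1 hi).le
  have hE' : E ⊆ ⋃ i, Q i ∩ E := by rw [← iUnion_inter]; exact subset_inter hE subset_rfl
  calc μ E ≤ ∑' i, μ (Q i ∩ E) := (measure_mono hE').trans (measure_iUnion_le _)
    _ = ∑' i : Γ, μ (Q i ∩ E) + ∑' i : ↑Γᶜ, μ (Q i ∩ E) :=
      (ENNReal.summable.tsum_add_tsum_compl ENNReal.summable).symm
    _ ≤ ∑' i : Γ, μ (Q i) + ∑' i : ↑Γᶜ, a⁻¹ * μ (Q i) := by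
      gcongr with i i
      · exact inter_subset_left
      · exact hsmall i i.2
    _ ≤ ∑' i : Γ, μ (Q i) + a⁻¹ * ∑' i, μ (Q i) := by
      rw [ENNReal.tsum_mul_left]
      gcongr
      exact ENNReal.tsum_comp_le_tsum_of_injective Subtype.val_injective _

theorem ofReal_one_sub_div_mul_measure_le_tsum_substantial {X ι : Type*} [MeasurableSpace X]
    [Countable ι] (μ : Measure X) {E : Set X} {Q : ι → Set X} (hE : E ⊆ ⋃ i, Q i)
    (hμE : μ E ≠ ∞) {K α : ℝ} (hK : 0 ≤ K) (hα : 0 < α)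
    (htotal : ∑' i, μ (Q i) ≤ ENNReal.ofReal K * μ E) :
    ENNReal.ofReal (1 - K / α) * μ E ≤
      ∑' i : {i | μ (Q i) ≤ ENNReal.ofReal α * μ (Q i ∩ E)}, μ (Q i) := by
  have hsplit := measure_le_tsum_substantial_add μ hE (ENNReal.ofReal_pos.2 hα).ne'
    ENNReal.ofReal_ne_top
  have hrest : (ENNReal.ofReal α)⁻¹ * ∑' i, μ (Q i) ≤ ENNReal.ofReal (K / α) * μ E := by
    calc (ENNReal.ofReal α)⁻¹ * ∑' i, μ (Q i)
        ≤ (ENNReal.ofReal α)⁻¹ * (ENNReal.ofReal K * μ E) := by gcongr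
      _ = ENNReal.ofReal (K / α) * μ E := by
        rw [ENNReal.ofReal_div_of_pos hα, ← mul_assoc, div_eq_mul_inv,
          mul_comm (ENNReal.ofReal K)]
  calc ENNReal.ofReal (1 - K / α) * μ E = μ E - ENNReal.ofReal (K / α) * μ E := by
        rw [ENNReal.ofReal_sub _ (by positivity), ENNReal.ofReal_one,
          ENNReal.sub_mul fun _ _ => hμE, one_mul]
    _ ≤ _ := tsub_le_iff_right.2 (hsplit.trans (by gcongr))

theorem stmt_0_general {n : ℕ} (hn : 0 < n) (α : ℝ) (hα : 2 < α) (E : Set (Fin n → ℝ))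
    (h0 : 0 < volume E) (hfin : volume E < ⊤) :
    ∀ ε : ℝ, 0 < ε → ∃ (c : ℕ → (Fin n → ℝ)) (r : ℕ → ℝ),
      (∀ i, 0 < r i) ∧
      (∀ i, Metric.diam (Metric.closedBall (c i) (r i)) < ε) ∧
      E ⊆ ⋃ i, Metric.closedBall (c i) (r i) ∧
      (∑' i, volume (Metric.closedBall (c i) (r i))) < 2 * volume E ∧
      ENNReal.ofReal (1 - 2 / α) * volume E ≤
        ∑' i : {i : ℕ | volume (Metric.closedBall (c i) (r i)) ≤
            ENNReal.ofReal α * volume (Metric.closedBall (c i) (r i) ∩ E)},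
          volume (Metric.closedBall (c (i : ℕ)) (r (i : ℕ))) := by
  intro ε hε
  have : Nonempty (Fin n) := ⟨⟨0, hn⟩⟩
  obtain ⟨c, r, hr, hcover, hsum⟩ := exists_seq_closedBall_covering_tsum_measure_le volume E
    (half_pos hε) (ENNReal.half_pos h0.ne').ne'
  have htotal : ∑' i, volume (closedBall (c i) (r i)) < 2 * volume E :=
    hsum.trans_lt <| by
      rw [two_mul]; exact ENNReal.add_lt_add_left hfin.ne (ENNReal.half_lt_self h0.ne' hfin.ne)
  refine ⟨c, r, fun i => (hr i).1, fun i => ?_, hcover, htotal, ?_⟩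
  · linarith [diam_closedBall (hr i).1.le (x := c i), (hr i).2]
  · exact ofReal_one_sub_div_mul_measure_le_tsum_substantial volume hcover hfin.ne zero_le_two
      (by linarith) (by rw [ENNReal.ofReal_ofNat]; exact htotal.le)

/-- Covering lemma: a set of finite positive measure can be covered by small closed
cubes with total volume less than twice the measure, and the cubes that meet `E`
substantially carry at least a `(1 - 2/α)` fraction of the measure of `E`. -/
theorem stmt_0 {n : ℕ} (hn : 0 < n) (α : ℝ) (hα : 2 < α) (E : Set (Fin n → ℝ))
    (hE : MeasurableSet E) (h0 : 0 < volume E) (hfin : volume E < ⊤) :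
    ∀ ε : ℝ, 0 < ε → ∃ (c : ℕ → (Fin n → ℝ)) (r : ℕ → ℝ),
      (∀ i, 0 < r i) ∧
      (∀ i, Metric.diam (Metric.closedBall (c i) (r i)) < ε) ∧
      E ⊆ ⋃ i, Metric.closedBall (c i) (r i) ∧
      (∑' i, volume (Metric.closedBall (c i) (r i))) < 2 * volume E ∧
      ENNReal.ofReal (1 - 2 / α) * volume E ≤
        ∑' i : {i : ℕ | volume (Metric.closedBall (c i) (r i)) ≤
            ENNReal.ofReal α * volume (Metric.closedBall (c i) (r i) ∩ E)},
          volume (Metric.closedBall (c (i : ℕ)) (r (i : ℕ))) :=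
  stmt_0_general hn α hα E h0 hfin
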